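/- arXiv:2605.24574 — 2 statements merged into one kernel-verified Lean document; each statement's English description precedes it below -/
import Mathlib

section
/- Let n ≥ 1, 1 ≤ p < ∞, and f ∈ L^p(ℍⁿ). Then ‖f + τ_{(u,s)}f‖_{L^p(ℍⁿ)} → 2^{1/p} ‖f‖_{L^p(ℍⁿ)} as |(u,s)| → ∞, where |(u,s)| denotes the Euclidean norm of (u,s) ∈ ℂⁿ × ℝ ≅ ℝ^{2n+1}. -/
open MeasureTheory Real Filter Set
open scoped ENNReal NNReal

noncomputable section

/-- The Heisenberg group ℍⁿ, underlying set ℂⁿ × ℝ. -/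
abbrev Heis (n : ℕ) : Type := (Fin n → ℂ) × ℝ

/-- The Heisenberg group law `(z,t)·(w,s) = (z+w, t+s+(1/2)Im(z·w̄))`. -/
def Hmul {n : ℕ} (x y : Heis n) : Heis n :=
  (x.1 + y.1, x.2 + y.2 + (1 / 2) * (∑ j, x.1 j * (starRingEnd ℂ) (y.1 j)).im)

/-- The Heisenberg group inverse `(z,t)⁻¹ = (-z,-t)`. -/
def Hinv {n : ℕ} (x : Heis n) : Heis n := (-x.1, -x.2)

/-- Laguerre polynomial `L_k^δ(t) = Σ_{j=0}^k (−1)^j binom(k+δ, k−j) t^j/j!` (natural type δ). -/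
def laguerrePoly (k δ : ℕ) (t : ℝ) : ℝ :=
  ∑ j ∈ Finset.range (k + 1),
    (-1 : ℝ) ^ j * (Nat.choose (k + δ) (k - j)) * t ^ j / (Nat.factorial j)

/-- Squared Euclidean norm of `z ∈ ℂⁿ`. -/
def normSqCn {n : ℕ} (z : Fin n → ℂ) : ℝ := ∑ j, Complex.normSq (z j)

/-- The Laguerre function `φ_{k,λ}(z) = L_k^{n−1}((1/2)|λ||z|²) e^{−(1/4)|λ||z|²}` on ℂⁿ. -/
def laguerreFun (n k : ℕ) (lam : ℝ) (z : Fin n → ℂ) : ℝ :=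
  laguerrePoly k (n - 1) ((1 / 2) * |lam| * normSqCn z) *
    Real.exp (-(1 / 4) * |lam| * normSqCn z)

/-- `e_{k,λ}(z,t) = e^{iλt} φ_{k,λ}(z)`. -/
def eFun (n k : ℕ) (lam : ℝ) (x : Heis n) : ℂ :=
  Complex.exp (Complex.I * lam * x.2) * (laguerreFun n k lam x.1 : ℂ)

/-- `c_{n,k} = k!(n−1)!/(k+n−1)!`. -/
def cnk (n k : ℕ) : ℝ :=
  (Nat.factorial k * Nat.factorial (n - 1) : ℝ) / (Nat.factorial (k + n - 1) : ℝ)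

/-- The normalized Strichartz Fourier transform
`F f(λ,k,w) = c_{n,k} ∫_{ℍⁿ} f(z,t) e_{k,λ}((z,t)⁻¹·(w,0)) dz dt`. -/
def SFT (n : ℕ) (f : Heis n → ℂ) (lam : ℝ) (k : ℕ) (w : Fin n → ℂ) : ℂ :=
  (cnk n k : ℂ) * ∫ x : Heis n, f x * eFun n k lam (Hmul (Hinv x) (w, (0 : ℝ)))

/-- The measure ν₂ on the Heisenberg fan `Ω = ℝ × ℕ`:
`dν₂(λ,k) = (2π)^{−2n−1} c_{n,k}^{−2} |λ|^{2n} dλ dcount(k)`. -/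
def nu2 (n : ℕ) : Measure (ℝ × ℕ) :=
  ((volume : Measure ℝ).prod Measure.count).withDensity fun a =>
    ENNReal.ofReal (((2 * π) ^ (2 * n + 1))⁻¹ * ((cnk n a.2) ^ 2)⁻¹ * |a.1| ^ (2 * n))

/-- The measure μ on the Heisenberg fan, `dμ = |λ|^{−n} dν₂`. -/
def muM (n : ℕ) : Measure (ℝ × ℕ) :=
  ((volume : Measure ℝ).prod Measure.count).withDensity fun a =>
    ENNReal.ofReal (((2 * π) ^ (2 * n + 1))⁻¹ * ((cnk n a.2) ^ 2)⁻¹ * |a.1| ^ n)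

/-- The Fourier multiplier operator
`T_m f(z,t) = ∫_Ω ∫_{ℂⁿ} c_{n,k} m(λ,k) F f(λ,k,w) e_{k,λ}((−w,0)·(z,t)) dw dν₂(λ,k)`. -/
def Tm (n : ℕ) (m : ℝ × ℕ → ℂ) (f : Heis n → ℂ) (x : Heis n) : ℂ :=
  ∫ a : ℝ × ℕ,
    (∫ w : Fin n → ℂ,
      (cnk n a.2 : ℂ) * m a * SFT n f a.1 a.2 w * eFun n a.2 a.1 (Hmul (-w, (0 : ℝ)) x))
    ∂(nu2 n)

/-- Left translation `τ_{(u,s)}f(z,t) = f((u,s)⁻¹·(z,t))`. -/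
def tau {n : ℕ} (us : Heis n) (f : Heis n → ℂ) : Heis n → ℂ :=
  fun x => f (Hmul (Hinv us) x)

/-!
Left translations of `ℍⁿ` preserve Lebesgue measure (a translation in `z` followed by a
`z`-dependent translation in `t`), so the maps `f ↦ ‖f + τ_a f‖_p` are `2`-Lipschitz on `L^p`
uniformly in `a`, and the set of `f` for which the limit holds is closed in `L^p`. It contains the
dense class of compactly supported functions: if `f` is supported in a compact `K`, then `f` and
`τ_a f` have disjoint supports as soon as `a ∉ K·K⁻¹`, and then `‖f + τ_a f‖_p^p = 2‖f‖_p^p`.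
Finally, a large Euclidean norm forces `a` out of every compact set.
-/

open scoped Topology

section DisjointSupports

variable {α E : Type*} [MeasurableSpace α] [NormedAddCommGroup E] {μ : Measure α} {p : ℝ≥0∞}

theorem eLpNorm_add_rpow_of_disjoint (hp0 : p ≠ 0) (hp : p ≠ ∞) {g h : α → E}
    (hg : AEStronglyMeasurable g μ) (hgh : Disjoint (Function.support g) (Function.support h)) :
    eLpNorm (g + h) p μ ^ p.toReal = eLpNorm g p μ ^ p.toReal + eLpNorm h p μ ^ p.toReal := by
  have hp' : 0 < p.toReal := ENNReal.toReal_pos hp0 hp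
  simp only [eLpNorm_eq_eLpNorm' hp0 hp, ← lintegral_rpow_enorm_eq_rpow_eLpNorm' hp']
  rw [← lintegral_add_left' (hg.enorm.pow_const _)]
  refine lintegral_congr fun x => ?_
  by_cases hx : g x = 0
  · simp [hx, ENNReal.zero_rpow_of_pos hp']
  · simp [Function.notMem_support.1 (hgh.notMem_of_mem_left (Function.mem_support.2 hx)),
      ENNReal.zero_rpow_of_pos hp']

theorem eLpNorm_add_comp_of_disjoint (hp0 : p ≠ 0) (hp : p ≠ ∞) {g : α → E} {φ : α → α}
    (hφ : MeasurePreserving φ μ μ) (hg : AEStronglyMeasurable g μ)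
    (hd : Disjoint (Function.support g) (Function.support (g ∘ φ))) :
    eLpNorm (g + g ∘ φ) p μ = 2 ^ (1 / p.toReal) * eLpNorm g p μ := by
  have hp' : p.toReal ≠ 0 := (ENNReal.toReal_pos hp0 hp).ne'
  rw [← ENNReal.rpow_rpow_inv hp' (eLpNorm (g + g ∘ φ) p μ),
    eLpNorm_add_rpow_of_disjoint hp0 hp hg hd, eLpNorm_comp_measurePreserving hg hφ, ← two_mul,
    ENNReal.mul_rpow_of_nonneg _ _ (by positivity), ENNReal.rpow_rpow_inv hp', one_div]

end DisjointSupports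

section EscapingTranslates

variable {α E ι : Type*} [MeasurableSpace α] [NormedAddCommGroup E] {μ : Measure α} {p : ℝ≥0∞}
  {φ : ι → α → α}

theorem MeasureTheory.Lp.norm_toLp_add_compMeasurePreserving {g : α → E} (hg : MemLp g p μ)
    {ψ : α → α} (hψ : MeasurePreserving ψ μ μ) :
    ‖hg.toLp g + Lp.compMeasurePreserving ψ hψ (hg.toLp g)‖ = (eLpNorm (g + g ∘ ψ) p μ).toReal := by
  rw [Lp.toLp_compMeasurePreserving, ← MemLp.toLp_add, Lp.norm_toLp]

variable [Fact (1 ≤ p)]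

theorem equicontinuous_norm_add_compMeasurePreserving (hφ : ∀ i, MeasurePreserving (φ i) μ μ) :
    Equicontinuous fun i (G : Lp E p μ) => ‖G + Lp.compMeasurePreserving (φ i) (hφ i) G‖ := by
  refine Metric.equicontinuous_of_continuity_modulus (2 * ·)
    (by simpa using (continuous_const_mul (2 : ℝ)).tendsto 0) _ fun G H i => ?_
  set T := Lp.compMeasurePreserving (E := E) (p := p) (φ i) (hφ i)
  calc dist ‖G + T G‖ ‖H + T H‖ ≤ ‖(G - H) + T (G - H)‖ := by
        rw [map_sub, ← add_sub_add_comm]; exact dist_norm_norm_le _ _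
    _ ≤ ‖G - H‖ + ‖T (G - H)‖ := norm_add_le _ _
    _ = 2 * dist G H := by rw [Lp.norm_compMeasurePreserving, dist_eq_norm]; ring

variable [TopologicalSpace α] [BorelSpace α] [NormalSpace α] [R1Space α]
  [WeaklyLocallyCompactSpace α] [μ.Regular] [NormedSpace ℝ E]

theorem MeasureTheory.Lp.dense_of_forall_hasCompactSupport_toLp_mem (hp : p ≠ ∞)
    {S : Set (Lp E p μ)}
    (hS : ∀ g : α → E, HasCompactSupport g → (hg : MemLp g p μ) → hg.toLp g ∈ S) : Dense S := by
  refine fun G => EMetric.mem_closure_iff.2 fun ε hε => ?_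
  obtain ⟨δ, hδ, hδε⟩ := exists_between hε
  obtain ⟨g, hgc, hGg, -, hg⟩ := (Lp.memLp G).exists_hasCompactSupport_eLpNorm_sub_le hp hδ.ne'
  refine ⟨hg.toLp g, hS g hgc hg, ?_⟩
  rw [← Lp.toLp_coeFn G (Lp.memLp G), Lp.edist_toLp_toLp]
  exact hGg.trans_lt hδε

theorem tendsto_eLpNorm_add_comp_of_eventually_disjoint (hp : p ≠ ∞)
    (hφ : ∀ i, MeasurePreserving (φ i) μ μ) {l : Filter ι}
    (hl : ∀ K, IsCompact K → ∀ᶠ i in l, Disjoint K (φ i ⁻¹' K)) {f : α → E} (hf : MemLp f p μ) :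
    Tendsto (fun i => eLpNorm (f + f ∘ φ i) p μ) l (𝓝 (2 ^ (1 / p.toReal) * eLpNorm f p μ)) := by
  have hp0 : p ≠ 0 := (zero_lt_one.trans_le Fact.out).ne'
  set S := {G : Lp E p μ | Tendsto (fun i => ‖G + Lp.compMeasurePreserving (φ i) (hφ i) G‖) l
    (𝓝 ((2 : ℝ) ^ (1 / p.toReal) * ‖G‖))}
  have hS : IsClosed S :=
    (equicontinuous_norm_add_compMeasurePreserving hφ).isClosed_setOfPred_tendsto
      (continuous_const.mul continuous_norm)
  have hcompact : ∀ g : α → E, HasCompactSupport g → (hg : MemLp g p μ) → hg.toLp g ∈ S := by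
    intro g hgc hg
    refine tendsto_const_nhds.congr' ?_
    filter_upwards [hl _ hgc] with i hi
    have hd : Disjoint (Function.support g) (Function.support (g ∘ φ i)) :=
      hi.mono (subset_tsupport g) (preimage_mono (subset_tsupport g))
    rw [Lp.norm_toLp_add_compMeasurePreserving, Lp.norm_toLp,
      eLpNorm_add_comp_of_disjoint hp0 hp (hφ i) hg.1 hd, ENNReal.toReal_mul,
      ← ENNReal.toReal_rpow, ENNReal.toReal_ofNat]
  have hfS : hf.toLp f ∈ S :=
    hS.closure_subset (Lp.dense_of_forall_hasCompactSupport_toLp_mem hp hcompact _)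
  simp only [S, mem_ofPred_eq, Lp.norm_toLp_add_compMeasurePreserving, Lp.norm_toLp] at hfS
  rwa [← ENNReal.toReal_ofNat, ENNReal.toReal_rpow, ← ENNReal.toReal_mul,
    ENNReal.tendsto_toReal_iff (fun i => ((hf.add (hf.comp_measurePreserving (hφ i))).2).ne)
      (ENNReal.mul_ne_top (by simp) hf.2.ne)] at hfS

end EscapingTranslates

theorem comap_atTop_le_cocompact {X : Type*} [TopologicalSpace X] {ρ : X → ℝ}
    (hρ : Continuous ρ) : comap ρ atTop ≤ cocompact X := by
  refine hasBasis_cocompact.ge_iff.2 fun K hK => ?_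
  obtain ⟨R, hR⟩ := (hK.image hρ).bddAbove
  exact mem_comap.2 ⟨Ioi R, Ioi_mem_atTop R, fun x hx hxK => (hR ⟨x, hxK, rfl⟩).not_gt hx⟩

namespace Heis

variable {n : ℕ}

theorem measurePreserving_hmul (a : Heis n) : MeasurePreserving (Hmul a) := by
  have hshear : Measurable (Function.uncurry fun (z : Fin n → ℂ) (t : ℝ) =>
      t + (a.2 + 1 / 2 * (∑ j, a.1 j * (starRingEnd ℂ) (z j)).im)) := by
    fun_prop
  have := (measurePreserving_add_left volume a.1).skew_product hshear
    (ae_of_all _ fun z => map_add_right_eq_self volume _)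
  rw [← Measure.volume_eq_prod] at this
  convert this using 1
  ext x <;> simp only [Hmul]; ring

theorem hmul_hinv_hmul_hinv (a x : Heis n) : Hmul x (Hinv (Hmul (Hinv a) x)) = a := by
  ext
  · simp [Hmul, Hinv]
  · simp only [Hmul, Hinv, Pi.add_apply, Pi.neg_apply, map_add, map_neg, mul_add, mul_neg, neg_mul,
      Finset.sum_add_distrib, Finset.sum_neg_distrib, Complex.add_im, Complex.neg_im]
    have im_swap : ∀ u v : Fin n → ℂ, (∑ j, u j * (starRingEnd ℂ) (v j)).im =
        -(∑ j, v j * (starRingEnd ℂ) (u j)).im := fun u v => by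
      rw [← Complex.conj_im, map_sum]; simp [mul_comm]
    have im_self : (∑ j, x.1 j * (starRingEnd ℂ) (x.1 j)).im = 0 := by
      simp [Complex.mul_conj]
    rw [im_swap a.1 x.1, im_self]; ring

theorem continuous_hmul_hinv : Continuous fun q : Heis n × Heis n => Hmul q.1 (Hinv q.2) := by
  unfold Hmul Hinv; fun_prop

theorem eventually_disjoint_preimage_hmul_hinv {K : Set (Heis n)} (hK : IsCompact K) :
    ∀ᶠ a in cocompact (Heis n), Disjoint K (Hmul (Hinv a) ⁻¹' K) := by
  refine mem_cocompact.2 ⟨_, (hK.prod hK).image continuous_hmul_hinv, fun a ha => ?_⟩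
  exact disjoint_left.2 fun x hx hx' =>
    ha ⟨(x, Hmul (Hinv a) x), ⟨hx, hx'⟩, hmul_hinv_hmul_hinv a x⟩

theorem continuous_euclideanNorm : Continuous fun a : Heis n => √(normSqCn a.1 + a.2 ^ 2) := by
  unfold normSqCn; fun_prop

end Heis

theorem translate_norm_limit_general (n : ℕ) (p : ℝ) (hp : 1 ≤ p)
    (f : Heis n → ℂ) (hf : MemLp f (ENNReal.ofReal p) (volume : Measure (Heis n))) :
    Tendsto
      (fun us : Heis n =>
        eLpNorm (fun x => f x + tau us f x) (ENNReal.ofReal p) (volume : Measure (Heis n)))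
      (comap (fun us : Heis n => Real.sqrt (normSqCn us.1 + us.2 ^ 2)) atTop)
      (nhds (ENNReal.ofReal ((2 : ℝ) ^ (1 / p)) *
        eLpNorm f (ENNReal.ofReal p) (volume : Measure (Heis n)))) := by
  have : Fact (1 ≤ ENNReal.ofReal p) := ⟨by simpa using ENNReal.ofReal_le_ofReal hp⟩
  have hlim := tendsto_eLpNorm_add_comp_of_eventually_disjoint ENNReal.ofReal_ne_top
    (fun a => Heis.measurePreserving_hmul (Hinv a))
    (fun K hK => comap_atTop_le_cocompact Heis.continuous_euclideanNorm
      (Heis.eventually_disjoint_preimage_hmul_hinv hK)) hf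
  rwa [ENNReal.toReal_ofReal (by linarith), ← ENNReal.ofReal_ofNat 2,
    ENNReal.ofReal_rpow_of_pos two_pos] at hlim

/-- `‖f + τ_{(u,s)}f‖_p → 2^{1/p} ‖f‖_p` as the Euclidean norm of `(u,s)` tends to infinity. -/
theorem translate_norm_limit (n : ℕ) (hn : 1 ≤ n) (p : ℝ) (hp : 1 ≤ p)
    (f : Heis n → ℂ) (hf : MemLp f (ENNReal.ofReal p) (volume : Measure (Heis n))) :
    Tendsto
      (fun us : Heis n =>
        eLpNorm (fun x => f x + tau us f x) (ENNReal.ofReal p) (volume : Measure (Heis n)))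
      (comap (fun us : Heis n => Real.sqrt (normSqCn us.1 + us.2 ^ 2)) atTop)
      (nhds (ENNReal.ofReal ((2 : ℝ) ^ (1 / p)) *
        eLpNorm f (ENNReal.ofReal p) (volume : Measure (Heis n)))) :=
  translate_norm_limit_general n p hp f hf

end
end

section
/- Let n ≥ 1 and f ∈ L¹(ℍⁿ). Then for every (λ,k) ∈ Ω, |λ|^{n/2} ( ∫_{ℂⁿ} |F f(λ,k,w)|² dw )^{1/2} ≤ (2π)^{n/2} ‖f‖_{L¹(ℍⁿ)}. -/
open MeasureTheory Real Filter Set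
open scoped ENNReal NNReal

noncomputable section

/-!
Since `|e_{k,λ}((z,t)⁻¹·(w,0))| = |φ_{k,λ}(w - z)|`, the transform is dominated pointwise by
`c_{n,k} (|f| * |φ_{k,λ}|)(w)`, and Cauchy–Schwarz followed by Tonelli (Minkowski's integral
inequality) gives `‖F f(λ,k,·)‖₂ ≤ c_{n,k} ‖f‖₁ ‖φ_{k,λ}‖₂`. Polar coordinates on `ℂⁿ` and the
substitution `u = |λ||z|²/2` reduce `‖φ_{k,λ}‖₂²` to the Laguerre norm
`∫₀^∞ u^{n-1} L_k^{n-1}(u)² e^{-u} du = (k+n-1)!/k!`, so `‖φ_{k,λ}‖₂² = (2π/|λ|)ⁿ / c_{n,k}`.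
Hence `|λ|^{n/2} ‖F f(λ,k,·)‖₂ ≤ c_{n,k}^{1/2} (2π)^{n/2} ‖f‖₁`, and `c_{n,k} ≤ 1`.
The Laguerre norm is computed by expanding the square into Gamma moments; the resulting double
sum collapses by the Chu–Vandermonde identity.
-/

open Finset

/-- Since `(-1)^b * C(a+δ+b, b) = C(-(a+δ+1), b)`, this is Chu–Vandermonde for
`C(k+δ - (a+δ+1), k) = C(k-a-1, k)`. -/
theorem sum_neg_one_pow_mul_choose_mul_choose (k δ a : ℕ) (ha : a ≤ k) :
    ∑ b ∈ range (k + 1), (-1 : ℤ) ^ b * (k + δ).choose (k - b) * (a + δ + b).choose b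
      = if a = k then (-1) ^ k else 0 := by
  have hV := Ring.add_choose_eq (r := ((k + δ : ℕ) : ℤ)) (s := -((a + δ + 1 : ℕ) : ℤ)) k
    (Commute.all _ _)
  rw [← Nat.sum_antidiagonal_swap] at hV
  simp only [Prod.fst_swap, Prod.snd_swap] at hV
  rw [Nat.sum_antidiagonal_eq_sum_range_succ (fun j i => Ring.choose ((k + δ : ℕ) : ℤ) i *
    Ring.choose (-((a + δ + 1 : ℕ) : ℤ)) j)] at hV
  convert hV.symm using 1
  · refine sum_congr rfl fun b _ => ?_
    rw [Ring.choose_neg, Ring.choose_natCast, Units.smul_def, Int.coe_negOnePow_natCast,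
      show ((a + δ + 1 : ℕ) : ℤ) + b - 1 = ((a + δ + b : ℕ) : ℤ) by push_cast; ring,
      Ring.choose_natCast, smul_eq_mul]
    ring
  · rcases ha.lt_or_eq with ha | rfl
    · rw [if_neg ha.ne, show ((k + δ : ℕ) : ℤ) + -((a + δ + 1 : ℕ) : ℤ) = ((k - a - 1 : ℕ) : ℤ) by
        push_cast [Nat.sub_sub, Nat.cast_sub (show a + 1 ≤ k by omega)]; ring,
        Ring.choose_natCast, Nat.choose_eq_zero_of_lt (by omega), Nat.cast_zero]
    · rw [if_pos rfl, show ((a + δ : ℕ) : ℤ) + -((a + δ + 1 : ℕ) : ℤ) = -1 by push_cast; ring,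
        Ring.choose_neg, Units.smul_def, Int.coe_negOnePow_natCast, add_sub_cancel_left,
        Ring.choose_natCast, Nat.choose_self, Nat.cast_one, smul_eq_mul, mul_one]

def laguerreCoeff (k δ j : ℕ) : ℝ := (-1) ^ j * (k + δ).choose (k - j) / j.factorial

theorem laguerrePoly_eq_sum (k δ : ℕ) (t : ℝ) :
    laguerrePoly k δ t = ∑ j ∈ range (k + 1), laguerreCoeff k δ j * t ^ j := by
  unfold laguerrePoly laguerreCoeff
  exact sum_congr rfl fun j _ => by ring

theorem sum_laguerreCoeff_mul_factorial (k δ a : ℕ) (ha : a ≤ k) :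
    ∑ b ∈ range (k + 1), laguerreCoeff k δ b * (a + b + δ).factorial
      = if a = k then (-1 : ℝ) ^ k * (k + δ).factorial else 0 := by
  have hterm : ∀ b, laguerreCoeff k δ b * (a + b + δ).factorial
      = (a + δ).factorial *
          (((-1 : ℤ) ^ b * (k + δ).choose (k - b) * (a + δ + b).choose b : ℤ) : ℝ) := by
    intro b
    have h := Nat.add_choose_mul_factorial_mul_factorial (a + δ) b
    rw [laguerreCoeff, show a + b + δ = a + δ + b by ring, ← h]
    push_cast
    field_simp
  simp_rw [hterm, ← mul_sum, ← Int.cast_sum, sum_neg_one_pow_mul_choose_mul_choose k δ a ha]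
  split_ifs with h
  · subst h; push_cast; ring
  · simp

theorem sum_sum_laguerreCoeff_mul_factorial (k δ : ℕ) :
    ∑ a ∈ range (k + 1), ∑ b ∈ range (k + 1),
      laguerreCoeff k δ a * laguerreCoeff k δ b * (a + b + δ).factorial
      = (k + δ).factorial / k.factorial := by
  simp_rw [mul_assoc, ← mul_sum]
  rw [sum_congr rfl fun a ha => by
    rw [sum_laguerreCoeff_mul_factorial k δ a (Nat.lt_succ_iff.mp (mem_range.mp ha))],
    sum_eq_single_of_mem k (self_mem_range_succ k) fun a _ ha => by rw [if_neg ha, mul_zero],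
    if_pos rfl, laguerreCoeff, Nat.sub_self, Nat.choose_zero_right]
  field_simp
  rw [Nat.cast_one, mul_one, ← pow_mul, pow_mul', neg_one_sq, one_pow]

theorem eqOn_pow_mul_exp_neg_Gamma_integrand (m : ℕ) :
    EqOn (fun x : ℝ => x ^ m * exp (-x)) (fun x => exp (-x) * x ^ ((m + 1 : ℕ) - 1 : ℝ)) (Ioi 0) :=
  fun x _ => by dsimp only; rw [Nat.cast_succ, add_sub_cancel_right, rpow_natCast, mul_comm]

theorem integrableOn_pow_mul_exp_neg_Ioi (m : ℕ) :
    IntegrableOn (fun x : ℝ => x ^ m * exp (-x)) (Ioi 0) :=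
  (GammaIntegral_convergent (Nat.cast_pos.mpr m.succ_pos)).congr_fun
    (eqOn_pow_mul_exp_neg_Gamma_integrand m).symm measurableSet_Ioi

theorem integral_pow_mul_exp_neg_Ioi (m : ℕ) :
    ∫ x in Ioi (0 : ℝ), x ^ m * exp (-x) = m.factorial := by
  rw [setIntegral_congr_fun measurableSet_Ioi (eqOn_pow_mul_exp_neg_Gamma_integrand m),
    ← Gamma_eq_integral (Nat.cast_pos.mpr m.succ_pos), Nat.cast_succ, Gamma_nat_eq_factorial]

theorem integral_laguerrePoly_sq_mul_exp_neg_Ioi (k δ : ℕ) :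
    ∫ u in Ioi (0 : ℝ), u ^ δ * laguerrePoly k δ u ^ 2 * exp (-u)
      = (k + δ).factorial / k.factorial := by
  have hexpand : ∀ u : ℝ, u ^ δ * laguerrePoly k δ u ^ 2 * exp (-u)
      = ∑ a ∈ range (k + 1), ∑ b ∈ range (k + 1),
          laguerreCoeff k δ a * laguerreCoeff k δ b * (u ^ (a + b + δ) * exp (-u)) := by
    intro u
    simp only [laguerrePoly_eq_sum, sq, mul_sum, sum_mul]
    exact sum_congr rfl fun a _ => sum_congr rfl fun b _ => by ring
  have hint : ∀ a b : ℕ, IntegrableOn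
      (fun u => laguerreCoeff k δ a * laguerreCoeff k δ b * (u ^ (a + b + δ) * exp (-u))) (Ioi 0) :=
    fun a b => (integrableOn_pow_mul_exp_neg_Ioi _).const_mul _
  simp_rw [hexpand]
  rw [integral_finsetSum _ fun a _ => integrable_finsetSum _ fun b _ => hint a b]
  simp_rw [integral_finsetSum _ fun b _ => hint _ b, integral_const_mul,
    integral_pow_mul_exp_neg_Ioi]
  exact sum_sum_laguerreCoeff_mul_factorial k δ

theorem integral_laguerrePoly_sq_mul_exp_neg_mul_Ioi (k δ : ℕ) {β : ℝ} (hβ : 0 < β) :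
    ∫ s in Ioi (0 : ℝ), s ^ δ * (laguerrePoly k δ (β * s) ^ 2 * exp (-(β * s)))
      = (k + δ).factorial / k.factorial / β ^ (δ + 1) := by
  have hscale : ∀ s : ℝ, s ^ δ * (laguerrePoly k δ (β * s) ^ 2 * exp (-(β * s)))
      = (β ^ δ)⁻¹ * ((β * s) ^ δ * laguerrePoly k δ (β * s) ^ 2 * exp (-(β * s))) := by
    intro s
    rw [mul_pow]
    field_simp
  simp_rw [hscale]
  rw [integral_const_mul,
    integral_comp_mul_left_Ioi (fun u => u ^ δ * laguerrePoly k δ u ^ 2 * exp (-u)) 0 hβ,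
    mul_zero, integral_laguerrePoly_sq_mul_exp_neg_Ioi, smul_eq_mul, pow_succ]
  field_simp

theorem integral_Ioi_pow_smul_comp_sq {E : Type*} [NormedAddCommGroup E] [NormedSpace ℝ E]
    (m : ℕ) (g : ℝ → E) :
    ∫ y in Ioi (0 : ℝ), y ^ (2 * m + 1) • g (y ^ 2)
      = (1 / 2 : ℝ) • ∫ s in Ioi (0 : ℝ), s ^ m • g s := by
  rw [← integral_comp_rpow_Ioi (fun s => s ^ m • g s) two_ne_zero, ← integral_smul]
  refine setIntegral_congr_fun measurableSet_Ioi fun y _ => ?_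
  simp only [smul_smul, rpow_two, abs_two]
  congr 1
  norm_num
  ring

section Radial

variable {ι : Type*} [Fintype ι]

theorem finrank_euclideanSpace_complex :
    Module.finrank ℝ (EuclideanSpace ℂ ι) = 2 * Fintype.card ι := by
  rw [← Module.finrank_mul_finrank ℝ ℂ, Complex.finrank_real_complex, finrank_euclideanSpace]

theorem measureReal_map_toLp_unitBall :
    ((volume : Measure (ι → ℂ)).map (MeasurableEquiv.toLp 2 (ι → ℂ))).real (Metric.ball 0 1)
      = π ^ Fintype.card ι / (Fintype.card ι).factorial := by
  rw [measureReal_def, MeasurableEquiv.map_apply]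
  have hball : (MeasurableEquiv.toLp 2 (ι → ℂ)) ⁻¹' Metric.ball 0 1
      = {x : ι → ℂ | ∑ i, ‖x i‖ ^ (2 : ℝ) < 1} := by
    ext x
    simp [EuclideanSpace.norm_eq, Real.sqrt_lt' one_pos]
  rw [hball, Complex.volume_sum_rpow_lt_one (ι := ι) (p := 2) one_le_two,
    show (2 : ℝ) / 2 + 1 = (1 : ℕ) + 1 by norm_num,
    show 2 * (Fintype.card ι : ℝ) / 2 + 1 = Fintype.card ι + 1 by ring, Gamma_nat_eq_factorial,
    Gamma_nat_eq_factorial, ENNReal.toReal_ofReal (by positivity)]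
  simp

theorem integral_comp_sum_norm_sq {E : Type*} [NormedAddCommGroup E] [NormedSpace ℝ E]
    [Nonempty ι] (g : ℝ → E) :
    ∫ z : ι → ℂ, g (∑ i, ‖z i‖ ^ 2)
      = (π ^ Fintype.card ι / (Fintype.card ι - 1).factorial) •
          ∫ s in Ioi (0 : ℝ), s ^ (Fintype.card ι - 1) • g s := by
  -- `ι → ℂ` carries the sup norm, so pass to the Euclidean norm of `EuclideanSpace ℂ ι`.
  set μ := (volume : Measure (ι → ℂ)).map (MeasurableEquiv.toLp 2 (ι → ℂ))
  have : μ.IsAddHaarMeasure :=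
    (PiLp.continuousLinearEquiv 2 ℝ (fun _ : ι => ℂ)).symm.isAddHaarMeasure_map volume
  have hmap : ∫ z : ι → ℂ, g (∑ i, ‖z i‖ ^ 2) = ∫ x, g (‖x‖ ^ 2) ∂μ := by
    rw [(MeasurableEquiv.toLp 2 (ι → ℂ)).measurableEmbedding.integral_map]
    simp [EuclideanSpace.norm_eq, Real.sq_sqrt (sum_nonneg fun i _ => sq_nonneg ‖_‖)]
  rw [hmap, integral_fun_norm_addHaar μ (fun r => g (r ^ 2)), measureReal_map_toLp_unitBall,
    finrank_euclideanSpace_complex]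
  obtain ⟨m, hm⟩ : ∃ m, Fintype.card ι = m + 1 := Nat.exists_eq_succ_of_ne_zero Fintype.card_ne_zero
  simp only [hm, show 2 * (m + 1) - 1 = 2 * m + 1 by omega, Nat.add_sub_cancel,
    integral_Ioi_pow_smul_comp_sq, smul_smul, ← Nat.cast_smul_eq_nsmul ℝ]
  congr 1
  push_cast [Nat.factorial_succ]
  field_simp

end Radial

section CauchySchwarz

variable {X Y : Type*} [MeasurableSpace X] [MeasurableSpace Y] {μ : Measure X} {ν : Measure Y}

theorem sq_lintegral_mul_le (F G : X → ℝ≥0∞) (hF : AEMeasurable F μ) (hG : AEMeasurable G μ) :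
    (∫⁻ x, F x * G x ∂μ) ^ 2 ≤ (∫⁻ x, F x ∂μ) * ∫⁻ x, F x * G x ^ 2 ∂μ := by
  have hhalf : ∀ a : ℝ≥0∞, (a ^ (1 / 2 : ℝ)) ^ 2 = a := fun a => by
    rw [← ENNReal.rpow_natCast, ← ENNReal.rpow_mul]; norm_num
  have hsplit : ∀ x, F x ^ (1 / 2 : ℝ) * (F x * G x ^ 2) ^ (1 / 2 : ℝ) = F x * G x := fun x => by
    rw [← ENNReal.mul_rpow_of_nonneg _ _ (by norm_num), ← mul_assoc, ← sq, ← mul_pow,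
      ← ENNReal.rpow_natCast, ← ENNReal.rpow_mul]
    norm_num
  have holder : ∫⁻ x, F x ^ (1 / 2 : ℝ) * (F x * G x ^ 2) ^ (1 / 2 : ℝ) ∂μ
      ≤ (∫⁻ x, F x ∂μ) ^ (1 / 2 : ℝ) * (∫⁻ x, F x * G x ^ 2 ∂μ) ^ (1 / 2 : ℝ) :=
    ENNReal.lintegral_mul_norm_pow_le hF (hF.mul (hG.pow_const 2)) (by norm_num) (by norm_num)
      (by norm_num)
  simp_rw [hsplit] at holder
  calc (∫⁻ x, F x * G x ∂μ) ^ 2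
      ≤ ((∫⁻ x, F x ∂μ) ^ (1 / 2 : ℝ) * (∫⁻ x, F x * G x ^ 2 ∂μ) ^ (1 / 2 : ℝ)) ^ 2 := by gcongr
    _ = _ := by rw [mul_pow, hhalf, hhalf]

variable [SFinite μ] [SFinite ν]

theorem lintegral_sq_lintegral_mul_le {F : X → ℝ≥0∞} {K : X → Y → ℝ≥0∞}
    (hF : AEMeasurable F μ) (hK : Measurable (Function.uncurry K)) {C : ℝ≥0∞}
    (hC : ∀ x, ∫⁻ y, K x y ^ 2 ∂ν ≤ C) :
    ∫⁻ y, (∫⁻ x, F x * K x y ∂μ) ^ 2 ∂ν ≤ (∫⁻ x, F x ∂μ) ^ 2 * C := by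
  have hKx : ∀ x, Measurable (K x) := fun x => hK.comp measurable_prodMk_left
  have hKy : ∀ y, Measurable (K · y) := fun y => hK.comp measurable_prodMk_right
  have hprod : AEMeasurable (Function.uncurry fun x y => F x * K x y ^ 2) (μ.prod ν) :=
    hF.comp_fst.mul (hK.pow_const 2).aemeasurable
  calc ∫⁻ y, (∫⁻ x, F x * K x y ∂μ) ^ 2 ∂ν
      ≤ ∫⁻ y, (∫⁻ x, F x ∂μ) * ∫⁻ x, F x * K x y ^ 2 ∂μ ∂ν :=
        lintegral_mono fun y => sq_lintegral_mul_le F (K · y) hF (hKy y).aemeasurable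
    _ = (∫⁻ x, F x ∂μ) * ∫⁻ x, F x * ∫⁻ y, K x y ^ 2 ∂ν ∂μ := by
        rw [lintegral_const_mul'' _ hprod.lintegral_prod_left, ← lintegral_lintegral_swap hprod]
        simp_rw [lintegral_const_mul'' _ ((hKx _).pow_const 2).aemeasurable]
    _ ≤ (∫⁻ x, F x ∂μ) * ∫⁻ x, F x * C ∂μ := by gcongr with x; exact hC x
    _ = (∫⁻ x, F x ∂μ) ^ 2 * C := by rw [lintegral_mul_const'' _ hF, sq, mul_assoc]

end CauchySchwarz

theorem cnk_pos (n k : ℕ) : 0 < cnk n k := by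
  unfold cnk; positivity

theorem cnk_le_one (n k : ℕ) (hn : 1 ≤ n) : cnk n k ≤ 1 := by
  rw [cnk, div_le_one (by positivity), show k + n - 1 = k + (n - 1) by omega]
  exact_mod_cast Nat.le_of_dvd (Nat.factorial_pos _)
    (Nat.factorial_mul_factorial_dvd_factorial_add k (n - 1))

theorem laguerreFun_sq_eq (n k : ℕ) (lam : ℝ) (z : Fin n → ℂ) :
    laguerreFun n k lam z ^ 2
      = laguerrePoly k (n - 1) (|lam| / 2 * ∑ j, ‖z j‖ ^ 2) ^ 2
          * exp (-(|lam| / 2 * ∑ j, ‖z j‖ ^ 2)) := by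
  simp only [laguerreFun, normSqCn, Complex.normSq_eq_norm_sq, mul_pow, ← exp_nat_mul]
  congr 3 <;> ring

theorem integral_laguerreFun_sq (n k : ℕ) (hn : 1 ≤ n) {lam : ℝ} (hlam : lam ≠ 0) :
    ∫ z : Fin n → ℂ, laguerreFun n k lam z ^ 2 = (2 * π / |lam|) ^ n / cnk n k := by
  have : Nonempty (Fin n) := ⟨⟨0, hn⟩⟩
  have hβ : 0 < |lam| / 2 := by positivity
  simp_rw [laguerreFun_sq_eq]
  rw [integral_comp_sum_norm_sq (fun s => laguerrePoly k (n - 1) (|lam| / 2 * s) ^ 2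
      * exp (-(|lam| / 2 * s))), Fintype.card_fin]
  simp_rw [smul_eq_mul]
  rw [integral_laguerrePoly_sq_mul_exp_neg_mul_Ioi k (n - 1) hβ, Nat.sub_add_cancel hn, cnk,
    show k + n - 1 = k + (n - 1) by omega]
  field_simp
  rw [← mul_pow, show |lam| / 2 * (2 * π / |lam|) = π by field_simp]

theorem lintegral_enorm_laguerreFun_sq (n k : ℕ) (hn : 1 ≤ n) {lam : ℝ} (hlam : lam ≠ 0) :
    ∫⁻ z : Fin n → ℂ, ‖laguerreFun n k lam z‖ₑ ^ 2
      = ENNReal.ofReal ((2 * π / |lam|) ^ n / cnk n k) := by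
  have hval := integral_laguerreFun_sq n k hn hlam
  -- A non-integrable function has Bochner integral `0`, so the nonzero value forces integrability.
  have hint : Integrable fun z : Fin n → ℂ => laguerreFun n k lam z ^ 2 :=
    .of_integral_ne_zero (by rw [hval]; have := cnk_pos n k; positivity)
  rw [← hval, ofReal_integral_eq_lintegral_ofReal hint (.of_forall fun z => sq_nonneg _)]
  simp_rw [Real.enorm_eq_ofReal_abs, ← ENNReal.ofReal_pow (abs_nonneg _), sq_abs]

theorem norm_eFun (n k : ℕ) (lam : ℝ) (x : Heis n) :
    ‖eFun n k lam x‖ = |laguerreFun n k lam x.1| := by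
  rw [eFun, norm_mul, Complex.norm_real, Real.norm_eq_abs,
    show Complex.I * lam * x.2 = ↑(lam * x.2) * Complex.I by push_cast; ring,
    Complex.norm_exp_ofReal_mul_I, one_mul]

theorem enorm_SFT_le (n : ℕ) (f : Heis n → ℂ) (lam : ℝ) (k : ℕ) (w : Fin n → ℂ) :
    ‖SFT n f lam k w‖ₑ
      ≤ ENNReal.ofReal (cnk n k) * ∫⁻ x, ‖f x‖ₑ * ‖laguerreFun n k lam (-x.1 + w)‖ₑ := by
  rw [SFT, enorm_mul, ← ofReal_norm, Complex.norm_real, Real.norm_of_nonneg (cnk_pos n k).le]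
  gcongr
  refine (enorm_integral_le_lintegral_enorm _).trans_eq (lintegral_congr fun x => ?_)
  rw [enorm_mul, ← ofReal_norm (eFun _ _ _ _), norm_eFun, ← Real.enorm_eq_ofReal_abs]
  rfl

theorem continuous_laguerreFun (n k : ℕ) (lam : ℝ) : Continuous (laguerreFun n k lam) := by
  unfold laguerreFun laguerrePoly normSqCn
  fun_prop

theorem lintegral_enorm_SFT_sq_le (n : ℕ) (hn : 1 ≤ n) {f : Heis n → ℂ}
    (hf : AEStronglyMeasurable f) {lam : ℝ} (hlam : lam ≠ 0) (k : ℕ) :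
    ∫⁻ w, ‖SFT n f lam k w‖ₑ ^ 2
      ≤ ENNReal.ofReal (cnk n k * (2 * π / |lam|) ^ n) * eLpNorm f 1 volume ^ 2 := by
  set K : Heis n → (Fin n → ℂ) → ℝ≥0∞ := fun x w => ‖laguerreFun n k lam (-x.1 + w)‖ₑ
  have hK : Measurable (Function.uncurry K) :=
    ((continuous_laguerreFun n k lam).comp (by fun_prop)).enorm.measurable
  have hKsq : ∀ x, ∫⁻ w, K x w ^ 2 ≤ ENNReal.ofReal ((2 * π / |lam|) ^ n / cnk n k) := fun x =>
    ((lintegral_add_left_eq_self (fun w => ‖laguerreFun n k lam w‖ₑ ^ 2) (-x.1)).trans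
      (lintegral_enorm_laguerreFun_sq n k hn hlam)).le
  calc ∫⁻ w, ‖SFT n f lam k w‖ₑ ^ 2
      ≤ ∫⁻ w, ENNReal.ofReal (cnk n k) ^ 2 * (∫⁻ x, ‖f x‖ₑ * K x w) ^ 2 :=
        lintegral_mono fun w => by rw [← mul_pow]; gcongr; exact enorm_SFT_le n f lam k w
    _ ≤ ENNReal.ofReal (cnk n k) ^ 2 *
          ((∫⁻ x, ‖f x‖ₑ) ^ 2 * ENNReal.ofReal ((2 * π / |lam|) ^ n / cnk n k)) := by
        rw [lintegral_const_mul' _ _ (by finiteness)]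
        gcongr
        exact lintegral_sq_lintegral_mul_le hf.enorm hK hKsq
    _ = _ := by
        rw [eLpNorm_one_eq_lintegral_enorm, mul_left_comm, ← ENNReal.ofReal_pow (cnk_pos n k).le,
          ← ENNReal.ofReal_mul (by positivity), mul_comm]
        congr 2
        have := (cnk_pos n k).ne'
        field_simp

theorem rpow_div_two_mul_rpow_one_half {a b c : ℝ} (ha : 0 < a) (hb : 0 < b) (hc : 0 ≤ c) (n : ℕ) :
    a ^ ((n : ℝ) / 2) * (c * (b / a) ^ n) ^ (1 / 2 : ℝ) = c ^ (1 / 2 : ℝ) * b ^ ((n : ℝ) / 2) := by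
  rw [Real.mul_rpow hc (by positivity), ← Real.rpow_natCast, ← Real.rpow_mul (by positivity),
    Real.div_rpow hb.le ha.le, mul_one_div]
  field_simp

/-- Uniform `L¹ → L^{(2,∞)}` bound for the Strichartz Fourier transform:
for every point of the Heisenberg fan,
`|λ|^{n/2} ‖F f(λ,k,·)‖_{L²(ℂⁿ)} ≤ (2π)^{n/2} ‖f‖_{L¹(ℍⁿ)}`. -/
theorem strichartz_L1_bound (n : ℕ) (hn : 1 ≤ n) (f : Heis n → ℂ)
    (hf : Integrable f (volume : Measure (Heis n)))
    (lam : ℝ) (hlam : lam ≠ 0) (k : ℕ) :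
    ENNReal.ofReal (|lam| ^ ((n : ℝ) / 2)) *
        (∫⁻ w : Fin n → ℂ, (‖SFT n f lam k w‖₊ : ℝ≥0∞) ^ 2) ^ ((1 : ℝ) / 2)
      ≤ ENNReal.ofReal ((2 * π) ^ ((n : ℝ) / 2)) *
          eLpNorm f 1 (volume : Measure (Heis n)) := by
  have hc := cnk_pos n k
  have hL2 : (∫⁻ w, ‖SFT n f lam k w‖ₑ ^ 2) ^ (1 / 2 : ℝ)
      ≤ ENNReal.ofReal ((cnk n k * (2 * π / |lam|) ^ n) ^ (1 / 2 : ℝ)) * eLpNorm f 1 volume := by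
    grw [lintegral_enorm_SFT_sq_le n hn hf.1 hlam k, ENNReal.mul_rpow_of_nonneg _ _ (by norm_num),
      ENNReal.ofReal_rpow_of_nonneg (by positivity) (by norm_num),
      show (1 / 2 : ℝ) = ((2 : ℕ) : ℝ)⁻¹ by norm_num, ENNReal.pow_rpow_inv_natCast two_ne_zero]
  calc ENNReal.ofReal (|lam| ^ ((n : ℝ) / 2)) *
        (∫⁻ w : Fin n → ℂ, (‖SFT n f lam k w‖₊ : ℝ≥0∞) ^ 2) ^ ((1 : ℝ) / 2)
      ≤ ENNReal.ofReal (|lam| ^ ((n : ℝ) / 2) * (cnk n k * (2 * π / |lam|) ^ n) ^ (1 / 2 : ℝ))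
          * eLpNorm f 1 volume := by
        rw [ENNReal.ofReal_mul (by positivity), mul_assoc]
        gcongr
        simpa [enorm_eq_nnnorm] using hL2
    _ = ENNReal.ofReal (cnk n k ^ (1 / 2 : ℝ) * (2 * π) ^ ((n : ℝ) / 2)) * eLpNorm f 1 volume := by
        rw [rpow_div_two_mul_rpow_one_half (abs_pos.mpr hlam) (by positivity) hc.le]
    _ ≤ ENNReal.ofReal ((2 * π) ^ ((n : ℝ) / 2)) * eLpNorm f 1 volume := by
        gcongr
        exact mul_le_of_le_one_left (by positivity)
          (Real.rpow_le_one hc.le (cnk_le_one n k hn) (by norm_num))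
end
end
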